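/- arXiv:1803.03339 — 2 statements merged into one kernel-verified Lean document; each statement's English description precedes it below -/
import Mathlib

section
/- Let p be an odd prime and r ≥ 3. In F_2[X], let S^{(p^r)}(X) = Σ_{l=(p^{r−1}+1)/2}^{p^{r−1}−1} d_l^{(p^r)}(X) and S̄^{(p^{r−1})}(X), S^{(p^{r−1})}(X) defined analogously one level down. Then S^{(p^r)}(X) ≡ S^{(p^{r−1})}(X) (mod X^{p^{r−1}}−1) if p ≡ 1 (mod 4), and S^{(p^r)}(X) ≡ S̄^{(p^{r−1})}(X) (mod X^{p^{r−1}}−1) if p ≡ 3 (mod 4). -/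
open Polynomial

/-- The Euler quotient modulo `p^s` of `u`, as a representative in `{0,...,p^s-1}`. -/
def eulerQuotient (p s u : ℕ) : ℕ :=
  ((u ^ (p ^ (s - 1) * (p - 1)) - 1) / p ^ s) % p ^ s

/-- The level set `D_l^{(p^r)} = {u : 0 ≤ u < p^r, gcd(u,p)=1, Q_{r-1}(u)=l}`. -/
def levelSetD (p r l : ℕ) : Finset ℕ :=
  (Finset.range (p ^ r)).filter (fun u => Nat.Coprime u p ∧ eulerQuotient p (r - 1) u = l)

/-- `d_l^{(p^r)}(X) = Σ_{n ∈ D_l^{(p^r)}} X^n ∈ F_2[X]`. -/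
noncomputable def dPoly (p r l : ℕ) : Polynomial (ZMod 2) :=
  ∑ n ∈ levelSetD p r l, X ^ n

/-- `S^{(p^r)}(X) = Σ_{l=(p^{r-1}+1)/2}^{p^{r-1}-1} d_l^{(p^r)}(X)`. -/
noncomputable def SPoly (p r : ℕ) : Polynomial (ZMod 2) :=
  ∑ l ∈ Finset.Icc ((p ^ (r - 1) + 1) / 2) (p ^ (r - 1) - 1), dPoly p r l

/-- `S̄^{(p^r)}(X) = Σ_{l=0}^{(p^{r-1}-1)/2} d_l^{(p^r)}(X)`. -/
noncomputable def SbarPoly (p r : ℕ) : Polynomial (ZMod 2) :=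
  ∑ l ∈ Finset.range ((p ^ (r - 1) - 1) / 2 + 1), dPoly p r l

/-!
Reduce modulo `X ^ p ^ s - 1`, where `r = s + 1`: the coefficient of `X ^ v` (`v < p ^ s`) becomes
the parity of the number of `k < p` for which `Q_s(v + k p ^ s)` lies in the upper half. By the
Taylor expansion `Q_s(v + k p ^ s) ≡ Q_s(v) + φ(p ^ s) v ^ (φ(p ^ s) - 1) k (mod p ^ s)`, and since
`Q_s(v) ≡ Q_{s-1}(v) (mod p ^ (s - 1))`, we get `Q_s(v + k p ^ s) = Q_{s-1}(v) + p ^ (s - 1) j_k`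
with `k ↦ j_k` a bijection of `ℤ/p`. Hence the count is `(p - 1) / 2` or `(p + 1) / 2` according as
`Q_{s-1}(v)` lies in the lower or the upper half, and `p mod 4` decides which of the two is odd.
-/

open Finset

/-- `eulerQuotient p w u` before its reduction modulo `p ^ w`. -/
def rawEulerQuotient (p w u : ℕ) : ℕ :=
  (u ^ (p ^ (w - 1) * (p - 1)) - 1) / p ^ w

section EulerQuotient

variable {p w u : ℕ}

lemma pow_totient_eq_one_add_mul_rawEulerQuotient (hp : p.Prime) (hw : w ≠ 0)
    (hu : u.Coprime p) :
    u ^ (p ^ (w - 1) * (p - 1)) = 1 + p ^ w * rawEulerQuotient p w u := by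
  have hmod := Nat.ModEq.pow_totient (hu.pow_right w)
  rw [Nat.totient_prime_pow hp (Nat.pos_of_ne_zero hw)] at hmod
  have hu0 : u ≠ 0 := by
    rintro rfl
    exact hp.one_lt.ne' (Nat.coprime_zero_left p |>.mp hu)
  have hpos := Nat.one_le_pow (p ^ (w - 1) * (p - 1)) u (Nat.pos_of_ne_zero hu0)
  rw [rawEulerQuotient, Nat.mul_div_cancel' ((Nat.modEq_iff_dvd' hpos).mp hmod.symm)]
  omega

lemma coprime_add_mul_prime_pow_iff (hp : p.Prime) (hw : w ≠ 0) (k : ℕ) :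
    (u + k * p ^ w).Coprime p ↔ u.Coprime p := by
  rw [Nat.coprime_comm, hp.coprime_iff_not_dvd, Nat.coprime_comm, hp.coprime_iff_not_dvd,
    Nat.dvd_add_left (dvd_mul_of_dvd_right (dvd_pow_self p hw) k)]

lemma rawEulerQuotient_add_mul_pow_modEq (hp : p.Prime) (hw : w ≠ 0) (hu : u.Coprime p)
    (k : ℕ) :
    rawEulerQuotient p w (u + k * p ^ w) ≡ rawEulerQuotient p w u +
      p ^ (w - 1) * (p - 1) * u ^ (p ^ (w - 1) * (p - 1) - 1) * k [MOD p ^ w] := by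
  set e := p ^ (w - 1) * (p - 1)
  set F := rawEulerQuotient p w u
  set F' := rawEulerQuotient p w (u + k * p ^ w)
  have hshift : (u + k * p ^ w : ℤ) ^ e = 1 + p ^ w * F' := by
    exact_mod_cast pow_totient_eq_one_add_mul_rawEulerQuotient hp hw
      ((coprime_add_mul_prime_pow_iff hp hw k).mpr hu)
  have hbase : (u : ℤ) ^ e = 1 + p ^ w * F := by
    exact_mod_cast pow_totient_eq_one_add_mul_rawEulerQuotient hp hw hu
  have htaylor := (pow_dvd_pow_of_dvd (dvd_mul_left ((p : ℤ) ^ w) k) 2).trans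
    (sq_dvd_add_pow_sub_sub ((k : ℤ) * p ^ w) (u : ℤ) e)
  rw [hshift, hbase, pow_two] at htaylor
  have hexpand : 1 + (p : ℤ) ^ w * F' - u ^ (e - 1) * (k * p ^ w) * e - (1 + p ^ w * F) =
      p ^ w * -(((F + e * u ^ (e - 1) * k : ℕ) : ℤ) - F') := by
    push_cast
    ring
  rw [hexpand, mul_dvd_mul_iff_left (pow_ne_zero _ (mod_cast hp.ne_zero)), dvd_neg] at htaylor
  exact Nat.modEq_iff_dvd.mpr (by exact_mod_cast htaylor)

lemma prime_pow_dvd_one_add_prime_pow_mul_pow_sub (hp : p.Prime) (hodd : Odd p) {t : ℕ}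
    (ht : t ≠ 0) (c : ℤ) :
    (p : ℤ) ^ (2 * t + 1) ∣ (1 + p ^ t * c) ^ p - (1 + p ^ (t + 1) * c) := by
  have hp3 : 3 ≤ p := by obtain ⟨m, rfl⟩ := hodd; have := hp.two_le; omega
  set y := (p : ℤ) ^ t * c
  have hexpand : (1 + y) ^ p = ∑ i ∈ range (p + 1), y ^ i * p.choose i := by
    rw [add_comm, add_pow]
    simp only [one_pow, mul_one]
  have hlow : ∑ i ∈ range 2, y ^ i * p.choose i = 1 + p ^ (t + 1) * c := by
    simp only [sum_range_succ, range_zero, sum_empty, Nat.choose_zero_right, Nat.choose_one_right]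
    ring
  rw [hexpand, ← sum_range_add_sum_Ico _ (by omega : 2 ≤ p + 1), hlow, add_sub_cancel_left]
  refine dvd_sum fun i hi => ?_
  obtain ⟨hi2, hip⟩ := mem_Ico.mp hi
  have hyi : (p : ℤ) ^ (t * i) ∣ y ^ i := by
    rw [pow_mul]
    exact pow_dvd_pow_of_dvd (dvd_mul_right _ _) i
  rcases Nat.lt_or_ge i p with hlt | hge
  · rw [pow_succ]
    refine mul_dvd_mul ((pow_dvd_pow _ ?_).trans hyi) (mod_cast hp.dvd_choose_self (by omega) hlt)
    have := Nat.mul_le_mul_left t hi2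
    omega
  · refine dvd_mul_of_dvd_left ((pow_dvd_pow _ ?_).trans hyi) _
    have := Nat.mul_le_mul_left t (show 3 ≤ i by omega)
    omega

/-- `u ^ φ(p ^ w) = (u ^ φ(p ^ (w - 1))) ^ p = (1 + p ^ (w - 1) c) ^ p`, expanded binomially. -/
lemma rawEulerQuotient_modEq_pred (hp : p.Prime) (hodd : Odd p) (hw : 2 ≤ w)
    (hu : u.Coprime p) :
    rawEulerQuotient p w u ≡ rawEulerQuotient p (w - 1) u [MOD p ^ (w - 1)] := by
  obtain ⟨t, rfl⟩ : ∃ t, w = t + 1 := ⟨w - 1, by omega⟩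
  rw [Nat.add_sub_cancel]
  have ht : t ≠ 0 := by omega
  have hexp : p ^ (t + 1 - 1) * (p - 1) = p ^ (t - 1) * (p - 1) * p := by
    rw [Nat.add_sub_cancel, mul_right_comm, ← pow_succ, Nat.sub_add_cancel (by omega)]
  have hpow := pow_totient_eq_one_add_mul_rawEulerQuotient hp (Nat.succ_ne_zero t) hu
  rw [hexp, pow_mul, pow_totient_eq_one_add_mul_rawEulerQuotient hp ht hu] at hpow
  have key := prime_pow_dvd_one_add_prime_pow_mul_pow_sub hp hodd ht
    (rawEulerQuotient p t u)
  have hpowZ : (1 + (p : ℤ) ^ t * rawEulerQuotient p t u) ^ p =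
      1 + p ^ (t + 1) * rawEulerQuotient p (t + 1) u := mod_cast hpow
  rw [hpowZ, add_sub_add_left_eq_sub, ← mul_sub, show 2 * t + 1 = (t + 1) + t by ring, pow_add,
    mul_dvd_mul_iff_left (pow_ne_zero _ (mod_cast hp.ne_zero))] at key
  exact (Nat.modEq_iff_dvd.mpr key).symm

/-- Shifting `v` by a multiple of `p ^ s` fixes the residue of `Q_s(v)` modulo `p ^ (s - 1)`,
which is `Q_{s-1}(v)`, and moves its top digit in base `p` affinely. -/
lemma exists_eulerQuotient_add_mul_prime_pow (hp : p.Prime) (hodd : Odd p) {s v : ℕ} (hs : 2 ≤ s)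
    (hv : v.Coprime p) :
    ∃ a c, c.Coprime p ∧ ∀ k, eulerQuotient p s (v + k * p ^ s) =
      eulerQuotient p (s - 1) v + p ^ (s - 1) * ((a + c * k) % p) := by
  set e := p ^ (s - 1) * (p - 1)
  set F := rawEulerQuotient p s v
  have hc : ((p - 1) * v ^ (e - 1)).Coprime p :=
    ((Nat.coprime_self_sub_left hp.one_le).mpr (Nat.coprime_one_left p)).mul_left (hv.pow_left _)
  refine ⟨F / p ^ (s - 1), (p - 1) * v ^ (e - 1), hc, fun k => ?_⟩
  have hshift := rawEulerQuotient_add_mul_pow_modEq hp (by omega : s ≠ 0) hv k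
  have hdesc := rawEulerQuotient_modEq_pred hp hodd hs hv
  calc eulerQuotient p s (v + k * p ^ s)
      = (F + p ^ (s - 1) * ((p - 1) * v ^ (e - 1) * k)) % p ^ s := by
        rw [show p ^ (s - 1) * ((p - 1) * v ^ (e - 1) * k) = e * v ^ (e - 1) * k by ring]
        exact hshift
    _ = (F + p ^ (s - 1) * ((p - 1) * v ^ (e - 1) * k)) % (p ^ (s - 1) * p) := by
        rw [← pow_succ, Nat.sub_add_cancel (by omega)]
    _ = _ := by
        rw [Nat.mod_mul, Nat.add_mul_mod_self_left, Nat.add_mul_div_left _ _ (pow_pos hp.pos _),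
          mul_assoc]
        exact congrArg (· + _) hdesc

end EulerQuotient

lemma card_filter_range_add_mul_mod {n a c : ℕ} (hc : c.Coprime n) (P : ℕ → Prop)
    [DecidablePred P] :
    #{k ∈ range n | P ((a + c * k) % n)} = #{j ∈ range n | P j} := by
  set f := fun k => (a + c * k) % n
  have hinj : Set.InjOn f (range n) := by
    intro k hk k' hk' hkk'
    exact Nat.ModEq.eq_of_lt_of_lt
      (Nat.ModEq.cancel_left_of_coprime (Nat.coprime_comm.mp hc) (Nat.ModEq.add_left_cancel' a hkk'))
      (mem_range.mp hk) (mem_range.mp hk')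
  have himage : (range n).image f = range n := by
    refine eq_of_subset_of_card_le (fun j hj => ?_) (card_image_of_injOn hinj).ge
    obtain ⟨k, hk, rfl⟩ := mem_image.mp hj
    exact mem_range.mpr (Nat.mod_lt _ (by have := mem_range.mp hk; omega))
  conv_rhs => rw [← himage, filter_image]
  exact (card_image_of_injOn (hinj.mono (filter_subset _ _))).symm

lemma card_filter_range_half_le {M n q : ℕ} (hM : Odd M) (hn : Odd n) (hq : q < M) :
    #{j ∈ range n | (M * n + 1) / 2 ≤ q + M * j} =
      if q ≤ (M - 1) / 2 then (n - 1) / 2 else (n + 1) / 2 := by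
  obtain ⟨d, rfl⟩ := hM
  obtain ⟨c, rfl⟩ := hn
  have hhalf : ((2 * d + 1) * (2 * c + 1) + 1) / 2 = 2 * c * d + c + d + 1 := by
    rw [show (2 * d + 1) * (2 * c + 1) + 1 = 2 * (2 * c * d + c + d + 1) by ring]
    omega
  have hiff : ∀ j, 2 * c * d + c + d + 1 ≤ q + (2 * d + 1) * j ↔
      (if q ≤ d then c + 1 else c) ≤ j := by
    intro j
    split_ifs <;> constructor <;> intro h <;> nlinarith
  have hfilter : {j ∈ range (2 * c + 1) | 2 * c * d + c + d + 1 ≤ q + (2 * d + 1) * j} =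
      Ico (if q ≤ d then c + 1 else c) (2 * c + 1) := by
    ext j
    simp only [mem_filter, mem_range, mem_Ico, hiff]
    tauto
  rw [hhalf, hfilter, Nat.card_Ico]
  split_ifs <;> omega

lemma card_filter_eulerQuotient_add_mul_mem_upper_half {p s v : ℕ} (hp : p.Prime) (hodd : Odd p)
    (hs : 2 ≤ s) (hv : v.Coprime p) :
    #{k ∈ range p | eulerQuotient p s (v + k * p ^ s) ∈ Icc ((p ^ s + 1) / 2) (p ^ s - 1)} =
      if eulerQuotient p (s - 1) v ≤ (p ^ (s - 1) - 1) / 2 then (p - 1) / 2 else (p + 1) / 2 := by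
  obtain ⟨a, c, hc, hshift⟩ := exists_eulerQuotient_add_mul_prime_pow hp hodd hs hv
  set q := eulerQuotient p (s - 1) v
  set M := p ^ (s - 1)
  have hq : q < M := Nat.mod_lt _ (pow_pos hp.pos _)
  have hM : p ^ s = M * p := by rw [← pow_succ, Nat.sub_add_cancel (by omega)]
  have hmem : ∀ j < p, q + M * j ∈ Icc ((p ^ s + 1) / 2) (p ^ s - 1) ↔
      (M * p + 1) / 2 ≤ q + M * j := by
    intro j hj
    have : q + M * j < M * p :=
      calc q + M * j < M * (j + 1) := by rw [mul_add_one]; omega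
        _ ≤ M * p := Nat.mul_le_mul_left M hj
    rw [mem_Icc, hM]
    omega
  rw [filter_congr fun k _ => by rw [hshift, hmem _ (Nat.mod_lt _ hp.pos)],
    card_filter_range_add_mul_mod hc (fun j => (M * p + 1) / 2 ≤ q + M * j)]
  exact card_filter_range_half_le hodd.pow hodd hq

lemma sum_range_mul_eq_sum_sum {M : Type*} [AddCommMonoid M] (f : ℕ → M) (m n : ℕ) :
    ∑ u ∈ range (m * n), f u = ∑ v ∈ range m, ∑ k ∈ range n, f (v + k * m) := by
  induction n with
  | zero => simp
  | succ n ih =>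
    rw [Nat.mul_succ, sum_range_add, ih, ← sum_add_distrib]
    refine sum_congr rfl fun v _ => ?_
    rw [sum_range_succ, add_comm (m * n), mul_comm n m]

/-- Modulo `X ^ m - 1` each `X ^ u` reduces to `X ^ (u % m)`, and in characteristic `2` only the
parity of the number of `u` lying over a given residue survives. -/
lemma X_pow_sub_one_dvd_sum_filter_sub_sum_filter {R : Type*} [CommRing R] [CharP R 2] {m n : ℕ}
    {P Q : ℕ → Prop} [DecidablePred P] [DecidablePred Q]
    (h : ∀ v < m, Odd #{k ∈ range n | P (v + k * m)} ↔ Q v) :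
    (X ^ m - 1 : R[X]) ∣ ∑ u ∈ range (m * n) with P u, X ^ u - ∑ v ∈ range m with Q v, X ^ v := by
  rw [sum_filter, sum_filter, sum_range_mul_eq_sum_sum, ← sum_sub_distrib]
  refine dvd_sum fun v hv => ?_
  have hparity : (if Q v then X ^ v else 0 : R[X]) = #{k ∈ range n | P (v + k * m)} • X ^ v := by
    simp only [nsmul_eq_mul, CharTwo.natCast_eq_ite, ← Nat.not_odd_iff_even, h v (mem_range.mp hv)]
    split_ifs <;> simp
  rw [hparity, ← sum_filter, ← sum_const, ← sum_sub_distrib]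
  refine dvd_sum fun k _ => ?_
  rw [pow_add, mul_comm k m, ← mul_sub_one, mul_comm]
  exact dvd_mul_of_dvd_left (pow_one_sub_dvd_pow_mul_sub_one X m k) _

lemma sum_dPoly_eq_sum_filter (p r : ℕ) (L : Finset ℕ) :
    ∑ l ∈ L, dPoly p r l =
      ∑ u ∈ range (p ^ r) with u.Coprime p ∧ eulerQuotient p (r - 1) u ∈ L, X ^ u := by
  have hmaps : ∀ u ∈ {u ∈ range (p ^ r) | u.Coprime p ∧ eulerQuotient p (r - 1) u ∈ L},
      eulerQuotient p (r - 1) u ∈ L := fun u hu => (mem_filter.mp hu).2.2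
  rw [← sum_fiberwise_of_maps_to hmaps]
  refine sum_congr rfl fun l hl => ?_
  rw [dPoly, levelSetD, filter_filter]
  refine sum_congr (filter_congr fun u _ => ?_) fun _ _ => rfl
  constructor
  · rintro ⟨hu, rfl⟩
    exact ⟨⟨hu, hl⟩, rfl⟩
  · rintro ⟨⟨hu, -⟩, rfl⟩
    exact ⟨hu, rfl⟩

lemma X_pow_sub_one_dvd_SPoly_succ_sub_sum_dPoly {p s : ℕ} (hp : p.Prime) (hodd : Odd p)
    (hs : 2 ≤ s) (L : Finset ℕ)
    (hL : ∀ q < p ^ (s - 1),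
      Odd (if q ≤ (p ^ (s - 1) - 1) / 2 then (p - 1) / 2 else (p + 1) / 2) ↔ q ∈ L) :
    (X ^ p ^ s - 1 : (ZMod 2)[X]) ∣ SPoly p (s + 1) - ∑ l ∈ L, dPoly p s l := by
  rw [SPoly, sum_dPoly_eq_sum_filter, sum_dPoly_eq_sum_filter, Nat.add_sub_cancel, pow_succ]
  refine X_pow_sub_one_dvd_sum_filter_sub_sum_filter fun v _ => ?_
  simp only [coprime_add_mul_prime_pow_iff hp (by omega : s ≠ 0)]
  by_cases hv : v.Coprime p
  · simp only [eq_true hv, true_and]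
    rw [card_filter_eulerQuotient_add_mul_mem_upper_half hp hodd hs hv]
    exact hL _ (Nat.mod_lt _ (pow_pos hp.pos _))
  · simp [hv]

theorem SPoly_congr_one_level_down (p : ℕ) (hp : p.Prime) (hodd : Odd p)
    (r : ℕ) (hr : 3 ≤ r) :
    (p % 4 = 1 →
      (X ^ (p ^ (r - 1)) - 1 : Polynomial (ZMod 2)) ∣ (SPoly p r - SPoly p (r - 1))) ∧
    (p % 4 = 3 →
      (X ^ (p ^ (r - 1)) - 1 : Polynomial (ZMod 2)) ∣ (SPoly p r - SbarPoly p (r - 1))) := by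
  obtain ⟨s, rfl⟩ : ∃ s, r = s + 1 := ⟨r - 1, by omega⟩
  have hs : 2 ≤ s := by omega
  have hM : p ^ (s - 1) % 2 = 1 := Nat.odd_iff.mp hodd.pow
  rw [Nat.add_sub_cancel]
  constructor <;> intro h4 <;> refine X_pow_sub_one_dvd_SPoly_succ_sub_sum_dPoly hp hodd hs _
    fun q hq => ?_
  · rw [mem_Icc, Nat.odd_iff]
    split_ifs <;> omega
  · rw [mem_range, Nat.odd_iff]
    split_ifs <;> omega
end

section
/- Let p be an odd prime and r ≥ 3. Define e(X) = Σ_{i=(p+1)/2}^{p−1} Σ_{j=0}^{(p^{r−2}−1)/2} d_{ip^{r−2}+j}^{(p^r)}(X) + Σ_{i=0}^{(p−3)/2} Σ_{j=(p^{r−2}+1)/2}^{p^{r−2}−1} d_{ip^{r−2}+j}^{(p^r)}(X) ∈ F_2[X]. Then S^{(p^r)}(X) + e(X) = Σ_{i=0}^{p−1} Σ_{j=(p^{r−2}+1)/2}^{p^{r−2}−1} d_{ip^{r−2}+j}^{(p^r)}(X), and this polynomial is divisible by Φ_{p^r}(X) = 1 + X^{p^{r−1}} + ... + X^{(p−1)p^{r−1}}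 in F_2[X]. -/
open Polynomial

/-- The error polynomial `e(X)`. -/
noncomputable def ePoly (p r : ℕ) : Polynomial (ZMod 2) :=
  (∑ i ∈ Finset.Icc ((p + 1) / 2) (p - 1), ∑ j ∈ Finset.range ((p ^ (r - 2) - 1) / 2 + 1),
      dPoly p r (i * p ^ (r - 2) + j)) +
  (∑ i ∈ Finset.range ((p - 3) / 2 + 1),
      ∑ j ∈ Finset.Icc ((p ^ (r - 2) + 1) / 2) (p ^ (r - 2) - 1),
      dPoly p r (i * p ^ (r - 2) + j))

-- lexicographic comparison lemma
lemma lexle {m q t b a : ℕ} (ht : t ≤ m) (ha : a < m) :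
    m * q + t ≤ m * b + a ↔ (q < b ∨ (q = b ∧ t ≤ a)) := by
  constructor
  · intro h
    rcases Nat.lt_trichotomy q b with h1 | h1 | h1
    · exact Or.inl h1
    · subst h1; exact Or.inr ⟨rfl, by omega⟩
    · exfalso
      have h2 : m * (b + 1) ≤ m * q := Nat.mul_le_mul_left m h1
      rw [Nat.mul_add, Nat.mul_one] at h2
      omega
  · rintro (h | ⟨rfl, h⟩)
    · have h2 : m * (q + 1) ≤ m * b := Nat.mul_le_mul_left m h
      rw [Nat.mul_add, Nat.mul_one] at h2
      omega
    · omega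
lemma dPoly_eq (p r l : ℕ) :
    dPoly p r l = ∑ u ∈ Finset.range (p ^ r),
      if Nat.Coprime u p ∧ eulerQuotient p (r - 1) u = l then (X : Polynomial (ZMod 2)) ^ u
      else 0 := by
  classical
  rw [dPoly, levelSetD, Finset.sum_filter]

lemma sum_dPoly (p r : ℕ) (L : Finset ℕ) :
    ∑ l ∈ L, dPoly p r l = ∑ u ∈ Finset.range (p ^ r),
      if Nat.Coprime u p ∧ eulerQuotient p (r - 1) u ∈ L then (X : Polynomial (ZMod 2)) ^ u
      else 0 := by
  classical
  simp_rw [dPoly_eq]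
  rw [Finset.sum_comm]
  refine Finset.sum_congr rfl fun u _ => ?_
  by_cases hA : Nat.Coprime u p
  · simp only [Nat.Coprime] at hA ⊢
    simp [hA, Finset.sum_ite_eq]
  · simp only [Nat.Coprime] at hA ⊢
    simp [hA]

lemma sum_sum_dPoly (p r : ℕ) (m : ℕ) (hm0 : 0 < m)
    (I J : Finset ℕ) (hJ : ∀ j ∈ J, j < m) :
    ∑ i ∈ I, ∑ j ∈ J, dPoly p r (i * m + j) =
      ∑ u ∈ Finset.range (p ^ r),
        if Nat.Coprime u p ∧ eulerQuotient p (r - 1) u / m ∈ I ∧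
            eulerQuotient p (r - 1) u % m ∈ J then (X : Polynomial (ZMod 2)) ^ u
        else 0 := by
  classical
  have hinner : ∀ i : ℕ, ∑ j ∈ J, dPoly p r (i * m + j)
      = ∑ l ∈ J.image (fun j => i * m + j), dPoly p r l := by
    intro i
    rw [Finset.sum_image (fun a _ b _ h => by omega)]
  simp_rw [hinner, sum_dPoly]
  rw [Finset.sum_comm]
  refine Finset.sum_congr rfl fun u _ => ?_
  have hmem : ∀ i : ℕ, (eulerQuotient p (r - 1) u ∈ J.image (fun j => i * m + j)) ↔
      (eulerQuotient p (r - 1) u / m = i ∧ eulerQuotient p (r - 1) u % m ∈ J) := by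
    intro i
    set Q := eulerQuotient p (r - 1) u with hQ
    simp only [Finset.mem_image]
    constructor
    · rintro ⟨j, hj, hE⟩
      have hjm := hJ j hj
      have h1 : Q / m = i := by
        rw [← hE, Nat.add_comm, Nat.add_mul_div_right _ _ hm0, Nat.div_eq_of_lt hjm, Nat.zero_add]
      have h2 : Q % m = j := by
        rw [← hE, Nat.add_comm, Nat.add_mul_mod_self_right, Nat.mod_eq_of_lt hjm]
      exact ⟨h1, h2 ▸ hj⟩
    · rintro ⟨h1, h2⟩
      exact ⟨Q % m, h2, by rw [← h1]; exact Nat.div_add_mod' Q m⟩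
  simp_rw [hmem]
  by_cases hA : Nat.Coprime u p
  · by_cases hB : eulerQuotient p (r - 1) u % m ∈ J
    · simp only [Nat.Coprime] at hA ⊢
      simp [hA, hB, Finset.sum_ite_eq]
    · simp only [Nat.Coprime] at hA ⊢
      simp [hA, hB]
  · simp only [Nat.Coprime] at hA ⊢
    simp [hA]
lemma add_pow_of_sq {R : Type*} [CommRing R] (x y : R) (N : ℕ) (hN : 2 ≤ N)
    (h2 : y * y = 0) (hN' : y * (N : R) = 0) : (x + y) ^ N = x ^ N := by
  rw [add_pow]
  rw [Finset.sum_eq_single N]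
  · simp
  · intro k hk hkN
    have hk' : k < N := by
      simp only [Finset.mem_range] at hk; omega
    by_cases hk1 : k = N - 1
    · subst hk1
      rw [show N - (N - 1) = 1 by omega, pow_one,
        show N.choose (N - 1) = N by rw [← Nat.choose_symm (by omega : N - 1 ≤ N),
          show N - (N - 1) = 1 by omega, Nat.choose_one_right]]
      rw [mul_assoc, hN', mul_zero]
    · have hy : y ^ (N - k) = 0 := by
        rw [show N - k = 2 + (N - k - 2) by omega, pow_add, pow_two, h2, zero_mul]
      rw [hy, mul_zero, zero_mul]
  · intro h
    exact absurd (Finset.mem_range.mpr (by omega)) h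

lemma coprime_shift (p s n i : ℕ) (hs : 1 ≤ s) :
    Nat.Coprime (i * p ^ s + n) p ↔ Nat.Coprime n p := by
  have hps : i * p ^ s + n = n + i * p ^ (s - 1) * p := by
    rw [mul_assoc, ← pow_succ, show s - 1 + 1 = s by omega]; ring
  rw [hps, Nat.coprime_add_mul_right_left]

lemma euler_dvd (p : ℕ) (hp : p.Prime) (s : ℕ) (hs : 1 ≤ s) (x : ℕ)
    (hx : Nat.Coprime x p) : p ^ s ∣ x ^ (p ^ (s - 1) * (p - 1)) - 1 := by
  have hx' : Nat.Coprime x (p ^ s) := hx.pow_right s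
  have he : x ^ (p ^ (s - 1) * (p - 1)) ≡ 1 [MOD p ^ s] := by
    have := Nat.ModEq.pow_totient hx'
    rwa [Nat.totient_prime_pow hp (by omega : 0 < s)] at this
  have hx1 : 1 ≤ x := by
    rcases Nat.eq_zero_or_pos x with h | h
    · exfalso; subst h
      simp [Nat.Coprime, Nat.gcd_zero_left] at hx
      exact hp.one_lt.ne' hx
    · exact h
  exact (Nat.modEq_iff_dvd' (Nat.one_le_pow _ _ hx1)).mp he.symm

lemma Q_shift (p : ℕ) (hp : p.Prime) (s : ℕ) (hs : 2 ≤ s) (n i : ℕ)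
    (hn : Nat.Coprime n p) :
    eulerQuotient p s (i * p ^ s + n) % p ^ (s - 1) =
      eulerQuotient p s n % p ^ (s - 1) := by
  set N := p ^ (s - 1) * (p - 1) with hN
  set u := i * p ^ s + n with hu
  set M := p ^ (2 * s - 1) with hM
  have hp2 : 2 ≤ p := hp.two_le
  have hun : Nat.Coprime u p := (coprime_shift p s n i (by omega)).mpr hn
  have hn1 : 1 ≤ n := by
    rcases Nat.eq_zero_or_pos n with h | h
    · exfalso; subst h
      simp [Nat.Coprime, Nat.gcd_zero_left] at hn
      exact hp.one_lt.ne' hn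
    · exact h
  have hA : p ^ s ∣ u ^ N - 1 := euler_dvd p hp s (by omega) u hun
  have hB : p ^ s ∣ n ^ N - 1 := euler_dvd p hp s (by omega) n hn
  have hN2 : 2 ≤ N := by
    have h1 : p ^ (s - 1) ≥ p := by
      calc p = p ^ 1 := (pow_one p).symm
      _ ≤ p ^ (s - 1) := Nat.pow_le_pow_right (by omega) (by omega)
    have : 1 ≤ p - 1 := by omega
    calc 2 ≤ p := hp2
    _ ≤ p ^ (s - 1) := h1
    _ = p ^ (s - 1) * 1 := (mul_one _).symm
    _ ≤ N := Nat.mul_le_mul_left _ this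
  -- the key congruence mod p^(2s-1)
  have hMod : u ^ N ≡ n ^ N [MOD M] := by
    rw [← ZMod.natCast_eq_natCast_iff]
    push_cast
    have hxy : ((u : ℕ) : ZMod M) = (n : ZMod M) + ((i * p ^ s : ℕ) : ZMod M) := by
      rw [hu]; push_cast; ring
    rw [hxy]
    apply add_pow_of_sq _ _ N hN2
    · rw [← Nat.cast_mul, ZMod.natCast_eq_zero_iff]
      have heq : i * p ^ s * (i * p ^ s) = i * i * p ^ (s + s) := by
        rw [pow_add]; ring
      rw [heq, hM]
      exact Dvd.dvd.mul_left (pow_dvd_pow p (by omega)) _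
    · rw [← Nat.cast_mul, ZMod.natCast_eq_zero_iff]
      have heq : i * p ^ s * N = i * (p - 1) * p ^ (s + (s - 1)) := by
        rw [hN, pow_add]; ring
      rw [heq, hM, show 2 * s - 1 = s + (s - 1) by omega]
      exact Dvd.dvd.mul_left dvd_rfl _
  have hAB : u ^ N - 1 ≡ n ^ N - 1 [MOD M] := by
    have h1 : u ^ N - 1 + 1 = u ^ N := Nat.sub_add_cancel (Nat.one_le_pow _ _ (by positivity))
    have h2 : n ^ N - 1 + 1 = n ^ N := Nat.sub_add_cancel (Nat.one_le_pow _ _ (by omega))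
    apply Nat.ModEq.add_right_cancel' 1
    rw [h1, h2]; exact hMod
  have hMsplit : M = p ^ s * p ^ (s - 1) := by
    rw [hM, ← pow_add]; congr 1; omega
  have hcanc : (u ^ N - 1) / p ^ s ≡ (n ^ N - 1) / p ^ s [MOD p ^ (s - 1)] := by
    apply Nat.ModEq.mul_left_cancel' (c := p ^ s) (by positivity)
    rw [Nat.mul_div_cancel' hA, Nat.mul_div_cancel' hB, ← hMsplit]
    exact hAB
  show ((u ^ N - 1) / p ^ s) % p ^ s % p ^ (s - 1) = ((n ^ N - 1) / p ^ s) % p ^ s % p ^ (s - 1)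
  rw [Nat.mod_mod_of_dvd _ (pow_dvd_pow p (by omega : s - 1 ≤ s)),
    Nat.mod_mod_of_dvd _ (pow_dvd_pow p (by omega : s - 1 ≤ s))]
  exact hcanc
lemma sum_range_mul {M : Type*} [AddCommMonoid M] (f : ℕ → M) (a b : ℕ) :
    ∑ u ∈ Finset.range (a * b), f u =
      ∑ i ∈ Finset.range a, ∑ n ∈ Finset.range b, f (i * b + n) := by
  induction a with
  | zero => simp
  | succ a ih =>
    rw [Finset.sum_range_succ, ← ih, Nat.succ_mul, Finset.range_eq_Ico,
      ← Finset.sum_Ico_consecutive f (Nat.zero_le (a * b)) (Nat.le_add_right _ b),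
      ← Finset.range_eq_Ico]
    congr 1
    rw [Finset.sum_Ico_eq_sum_range]
    simp

lemma ite_combine (c : Polynomial (ZMod 2)) (p m l : ℕ)
    (hpodd : Odd p) (hp3 : 3 ≤ p) (hmodd : Odd m) (hm3 : 3 ≤ m) (hl : l < m * p) :
    ((if l ∈ Finset.Icc ((m * p + 1) / 2) (m * p - 1) then c else 0) +
      ((if l / m ∈ Finset.Icc ((p + 1) / 2) (p - 1) ∧
          l % m ∈ Finset.range ((m - 1) / 2 + 1) then c else 0) +
        (if l / m ∈ Finset.range ((p - 3) / 2 + 1) ∧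
          l % m ∈ Finset.Icc ((m + 1) / 2) (m - 1) then c else 0))) =
    (if l / m ∈ Finset.range p ∧ l % m ∈ Finset.Icc ((m + 1) / 2) (m - 1) then c
      else 0) := by
  classical
  have hcc : c + c = 0 := by
    rw [← two_smul (ZMod 2) c, show (2 : ZMod 2) = 0 from rfl, zero_smul]
  obtain ⟨cc, hpc⟩ := hpodd
  obtain ⟨d, hmd⟩ := hmodd
  have hc1 : 1 ≤ cc := by omega
  have hd1 : 1 ≤ d := by omega
  set b := l / m with hb'
  set a := l % m with ha'
  have ha : a < m := Nat.mod_lt _ (by omega)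
  have hab : m * b + a = l := by rw [hb', ha', Nat.mul_comm]; exact Nat.div_add_mod' l m
  have hbp : b < p := by
    rw [hb']
    exact Nat.div_lt_of_lt_mul (by omega)
  have hhalf : (m * p + 1) / 2 = m * cc + (d + 1) := by
    have h2 : m * p + 1 = 2 * (m * cc + (d + 1)) := by
      rw [hpc, hmd]; ring
    omega
  have key : (m * p + 1) / 2 ≤ l ↔ (cc < b ∨ (cc = b ∧ d + 1 ≤ a)) := by
    rw [hhalf, ← hab]
    exact lexle (by omega) ha
  simp only [Finset.mem_Icc, Finset.mem_range]
  have hCS : ((m * p + 1) / 2 ≤ l ∧ l ≤ m * p - 1) ↔ (cc < b ∨ (cc = b ∧ d + 1 ≤ a)) := by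
    rw [key]
    constructor
    · exact fun h => h.1
    · exact fun h => ⟨h, by omega⟩
  have hCA : (((p + 1) / 2 ≤ b ∧ b ≤ p - 1) ∧ a < (m - 1) / 2 + 1) ↔
      (cc + 1 ≤ b ∧ a ≤ d) := by omega
  have hCC : (b < (p - 3) / 2 + 1 ∧ ((m + 1) / 2 ≤ a ∧ a ≤ m - 1)) ↔
      (b < cc ∧ d + 1 ≤ a) := by omega
  have hCR : (b < p ∧ ((m + 1) / 2 ≤ a ∧ a ≤ m - 1)) ↔ (d + 1 ≤ a) := by omega
  rw [if_congr hCS rfl rfl, if_congr hCA rfl rfl, if_congr hCC rfl rfl,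
    if_congr hCR rfl rfl]
  by_cases hE : d + 1 ≤ a <;> by_cases hA' : cc + 1 ≤ b <;>
    by_cases hBC : b = cc <;>
    first
      | (rw [if_pos (by omega), if_neg (by omega), if_neg (by omega),
          if_pos (by omega)]; simp)
      | (rw [if_neg (by omega), if_neg (by omega), if_pos (by omega),
          if_pos (by omega)]; simp)
      | (rw [if_pos (by omega), if_pos (by omega), if_neg (by omega),
          if_neg (by omega)]; simpa using hcc)
      | (rw [if_neg (by omega), if_neg (by omega), if_neg (by omega),
          if_neg (by omega)]; simp)
theorem SPoly_add_ePoly (p : ℕ) (hp : p.Prime) (hodd : Odd p)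
    (r : ℕ) (hr : 3 ≤ r) :
    SPoly p r + ePoly p r =
      (∑ i ∈ Finset.range p, ∑ j ∈ Finset.Icc ((p ^ (r - 2) + 1) / 2) (p ^ (r - 2) - 1),
        dPoly p r (i * p ^ (r - 2) + j)) ∧
    (∑ i ∈ Finset.range p, (X : Polynomial (ZMod 2)) ^ (i * p ^ (r - 1))) ∣
      (SPoly p r + ePoly p r) := by
  classical
  have hp3 : 3 ≤ p := by
    have h2 := hp.two_le
    obtain ⟨k, hk⟩ := hodd
    omega
  have hm0 : 0 < p ^ (r - 2) := by positivity
  have hm3 : 3 ≤ p ^ (r - 2) :=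
    le_trans hp3 (Nat.le_self_pow (by omega) p)
  have hmodd : Odd (p ^ (r - 2)) := hodd.pow
  have hpm : p ^ (r - 1) = p ^ (r - 2) * p := by
    rw [← pow_succ]; congr 1; omega
  have hQlt : ∀ u, eulerQuotient p (r - 1) u < p ^ (r - 2) * p := by
    intro u
    rw [← hpm]
    exact Nat.mod_lt _ (by positivity)
  have hJ1 : ∀ j ∈ Finset.range ((p ^ (r - 2) - 1) / 2 + 1), j < p ^ (r - 2) := by
    intro j hj; simp only [Finset.mem_range] at hj; omega
  have hJ2 : ∀ j ∈ Finset.Icc ((p ^ (r - 2) + 1) / 2) (p ^ (r - 2) - 1),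
      j < p ^ (r - 2) := by
    intro j hj; simp only [Finset.mem_Icc] at hj; omega
  have hdiv : ∀ u, eulerQuotient p (r - 1) u / p ^ (r - 2) ∈ Finset.range p :=
    fun u => Finset.mem_range.mpr (Nat.div_lt_of_lt_mul (hQlt u))
  -- Part 1
  have h1 : SPoly p r + ePoly p r =
      (∑ i ∈ Finset.range p, ∑ j ∈ Finset.Icc ((p ^ (r - 2) + 1) / 2) (p ^ (r - 2) - 1),
        dPoly p r (i * p ^ (r - 2) + j)) := by
    rw [SPoly, ePoly, hpm]
    rw [sum_dPoly, sum_sum_dPoly p r _ hm0 _ _ hJ1, sum_sum_dPoly p r _ hm0 _ _ hJ2,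
      sum_sum_dPoly p r _ hm0 _ _ hJ2]
    rw [← Finset.sum_add_distrib, ← Finset.sum_add_distrib]
    refine Finset.sum_congr rfl fun u hu => ?_
    by_cases hA : Nat.Coprime u p
    · simp only [Nat.Coprime] at hA ⊢
      simp only [hA, eq_self_iff_true, true_and]
      exact ite_combine (X ^ u) p (p ^ (r - 2)) (eulerQuotient p (r - 1) u)
        hodd hp3 hmodd hm3 (hQlt u)
    · simp only [Nat.Coprime] at hA ⊢
      simp [hA]
  refine ⟨h1, ?_⟩
  rw [h1, sum_sum_dPoly p r _ hm0 _ _ hJ2]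
  have hpr : p ^ r = p * p ^ (r - 1) := by
    rw [← pow_succ']; congr 1; omega
  rw [hpr, sum_range_mul]
  have hCinv : ∀ i n : ℕ, (Nat.Coprime (i * p ^ (r - 1) + n) p ∧
      eulerQuotient p (r - 1) (i * p ^ (r - 1) + n) / p ^ (r - 2) ∈ Finset.range p ∧
      eulerQuotient p (r - 1) (i * p ^ (r - 1) + n) % p ^ (r - 2) ∈
        Finset.Icc ((p ^ (r - 2) + 1) / 2) (p ^ (r - 2) - 1)) ↔
      (Nat.Coprime n p ∧
      eulerQuotient p (r - 1) n / p ^ (r - 2) ∈ Finset.range p ∧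
      eulerQuotient p (r - 1) n % p ^ (r - 2) ∈
        Finset.Icc ((p ^ (r - 2) + 1) / 2) (p ^ (r - 2) - 1)) := by
    intro i n
    have hco := coprime_shift p (r - 1) n i (by omega)
    constructor
    · rintro ⟨h1', _, h3'⟩
      have hcn : Nat.Coprime n p := hco.mp h1'
      have hq := Q_shift p hp (r - 1) (by omega) n i hcn
      rw [show r - 1 - 1 = r - 2 by omega] at hq
      rw [hq] at h3'
      exact ⟨hcn, hdiv n, h3'⟩
    · rintro ⟨hcn, _, h3'⟩
      have hq := Q_shift p hp (r - 1) (by omega) n i hcn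
      rw [show r - 1 - 1 = r - 2 by omega] at hq
      rw [← hq] at h3'
      exact ⟨hco.mpr hcn, hdiv _, h3'⟩
  have hstep : ∀ i ∈ Finset.range p,
      (∑ n ∈ Finset.range (p ^ (r - 1)),
        if Nat.Coprime (i * p ^ (r - 1) + n) p ∧
          eulerQuotient p (r - 1) (i * p ^ (r - 1) + n) / p ^ (r - 2) ∈ Finset.range p ∧
          eulerQuotient p (r - 1) (i * p ^ (r - 1) + n) % p ^ (r - 2) ∈
            Finset.Icc ((p ^ (r - 2) + 1) / 2) (p ^ (r - 2) - 1)
        then (X : Polynomial (ZMod 2)) ^ (i * p ^ (r - 1) + n) else 0) =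
      (X : Polynomial (ZMod 2)) ^ (i * p ^ (r - 1)) *
        ∑ n ∈ Finset.range (p ^ (r - 1)),
          (if Nat.Coprime n p ∧
            eulerQuotient p (r - 1) n / p ^ (r - 2) ∈ Finset.range p ∧
            eulerQuotient p (r - 1) n % p ^ (r - 2) ∈
              Finset.Icc ((p ^ (r - 2) + 1) / 2) (p ^ (r - 2) - 1)
          then (X : Polynomial (ZMod 2)) ^ n else 0) := by
    intro i _
    rw [Finset.mul_sum]
    refine Finset.sum_congr rfl fun n _ => ?_
    rw [if_congr (hCinv i n) rfl rfl, pow_add, mul_ite, mul_zero]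
  rw [Finset.sum_congr rfl hstep, ← Finset.sum_mul]
  exact dvd_mul_right _ _
end
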